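/- Let d ≥ 1 and ε ∈ (0,1]. If a nonzero matrix A ∈ ℝ^{d×d} satisfies the Cordes condition with parameter ε, then the normalized matrix γ·A satisfies ‖γ·A‖₂ ≤ 1 + √(1−ε) ≤ 2, where ‖·‖₂ denotes the operator norm induced by the Euclidean norm on ℝ^d. (This is the bound ‖γA‖_{L∞(Ω)} ≤ 1+√(1−ε) ≤ 2 used repeatedly in the proofs of Lemma 3.6 and Theorems 4.1 and 4.2.) -/

import Mathlib

open Matrix

/-- Frobenius inner product of two `d × d` real matrices. -/
noncomputable def frobInner {d : ℕ} (A B : Matrix (Fin d) (Fin d) ℝ) : ℝ :=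
  ∑ i, ∑ j, A i j * B i j

/-- Frobenius norm of a `d × d` real matrix. -/
noncomputable def frobNorm {d : ℕ} (A : Matrix (Fin d) (Fin d) ℝ) : ℝ :=
  Real.sqrt (frobInner A A)

/-- The Cordes condition with parameter `ε`. -/
def CordesCond {d : ℕ} (ε : ℝ) (A : Matrix (Fin d) (Fin d) ℝ) : Prop :=
  ((d : ℝ) - 1 + ε) * frobNorm A ^ 2 ≤ trace A ^ 2

/-- The operator norm of a matrix induced by the Euclidean norm on `ℝ^d`. -/
noncomputable def euclOpNorm {d : ℕ} (A : Matrix (Fin d) (Fin d) ℝ) : ℝ :=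
  ‖LinearMap.toContinuousLinearMap (Matrix.toEuclideanLin A)‖
/-!
With `γ = tr A / ‖A‖_F²`, expanding the square gives
`‖γA - I‖_F² = γ²‖A‖_F² - 2γ tr A + d = d - (tr A)² / ‖A‖_F²`, which the Cordes condition
bounds by `1 - ε`. Since the operator norm is dominated by the Frobenius norm and `‖I‖₂ ≤ 1`,
the triangle inequality gives `‖γA‖₂ ≤ 1 + ‖γA - I‖_F ≤ 1 + √(1 - ε)`.
-/

section Frobenius

variable {d : ℕ}

lemma frobInner_eq_trace_transpose_mul (A B : Matrix (Fin d) (Fin d) ℝ) :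
    frobInner A B = trace (Aᵀ * B) := by
  simp only [frobInner, trace, diag_apply, mul_apply, transpose_apply]
  exact Finset.sum_comm

lemma frobInner_self_nonneg (A : Matrix (Fin d) (Fin d) ℝ) : 0 ≤ frobInner A A :=
  Finset.sum_nonneg fun i _ => Finset.sum_nonneg fun j _ => mul_self_nonneg (A i j)

lemma frobInner_self_pos {A : Matrix (Fin d) (Fin d) ℝ} (hA : A ≠ 0) : 0 < frobInner A A := by
  obtain ⟨i, j, hij⟩ : ∃ i j, A i j ≠ 0 := by
    by_contra! h
    exact hA (Matrix.ext h)
  exact Finset.sum_pos' (fun i _ => Finset.sum_nonneg fun j _ => mul_self_nonneg _)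
    ⟨i, Finset.mem_univ i, Finset.sum_pos' (fun j _ => mul_self_nonneg _)
      ⟨j, Finset.mem_univ j, mul_self_pos.2 hij⟩⟩

lemma frobNorm_sq (A : Matrix (Fin d) (Fin d) ℝ) : frobNorm A ^ 2 = frobInner A A :=
  Real.sq_sqrt (frobInner_self_nonneg A)

lemma frobNorm_sq_pos {A : Matrix (Fin d) (Fin d) ℝ} (hA : A ≠ 0) : 0 < frobNorm A ^ 2 :=
  frobNorm_sq A ▸ frobInner_self_pos hA

lemma frobInner_smul_sub_one_self (c : ℝ) (A : Matrix (Fin d) (Fin d) ℝ) :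
    frobInner (c • A - 1) (c • A - 1) = c ^ 2 * frobInner A A - 2 * c * trace A + d := by
  simp only [frobInner_eq_trace_transpose_mul, transpose_sub, transpose_smul, transpose_one,
    sub_mul, mul_sub, Matrix.mul_smul, smul_mul_assoc, mul_one, one_mul, trace_sub, trace_smul,
    trace_transpose, trace_one, Fintype.card_fin, smul_eq_mul]
  ring

lemma frobInner_normalize_sub_one_self {A : Matrix (Fin d) (Fin d) ℝ} (hA : A ≠ 0) :
    frobInner ((trace A / frobNorm A ^ 2) • A - 1) ((trace A / frobNorm A ^ 2) • A - 1) =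
      d - trace A ^ 2 / frobNorm A ^ 2 := by
  have hA' := (frobNorm_sq_pos hA).ne'
  rw [frobInner_smul_sub_one_self, ← frobNorm_sq]
  field_simp
  ring

lemma CordesCond.frobNorm_normalize_sub_one_le {ε : ℝ} {A : Matrix (Fin d) (Fin d) ℝ}
    (hC : CordesCond ε A) (hA : A ≠ 0) :
    frobNorm ((trace A / frobNorm A ^ 2) • A - 1) ≤ Real.sqrt (1 - ε) := by
  refine Real.sqrt_le_sqrt ?_
  have hγ : (d - 1 + ε : ℝ) ≤ trace A ^ 2 / frobNorm A ^ 2 :=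
    (le_div_iff₀ (frobNorm_sq_pos hA)).2 hC
  rw [frobInner_normalize_sub_one_self hA]
  linarith

end Frobenius

section OperatorNorm

variable {d : ℕ}

open scoped Matrix.Norms.L2Operator in
lemma euclOpNorm_eq_l2_opNorm (A : Matrix (Fin d) (Fin d) ℝ) : euclOpNorm A = ‖A‖ := rfl

open scoped Matrix.Norms.L2Operator in
lemma euclOpNorm_le_one_add_euclOpNorm_sub_one (A : Matrix (Fin d) (Fin d) ℝ) :
    euclOpNorm A ≤ 1 + euclOpNorm (A - 1) := by
  have h1 : ‖(1 : Matrix (Fin d) (Fin d) ℝ)‖ ≤ 1 := by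
    rw [← l2_opNorm_toEuclideanCLM, map_one]
    exact ContinuousLinearMap.norm_id_le
  simp only [euclOpNorm_eq_l2_opNorm]
  calc ‖A‖ = ‖1 + (A - 1)‖ := by rw [add_sub_cancel]
    _ ≤ 1 + ‖A - 1‖ := (norm_add_le _ _).trans (by gcongr)

lemma euclOpNorm_le_frobNorm (A : Matrix (Fin d) (Fin d) ℝ) : euclOpNorm A ≤ frobNorm A := by
  refine ContinuousLinearMap.opNorm_le_bound _ (Real.sqrt_nonneg _) fun x => ?_
  rw [EuclideanSpace.norm_eq, EuclideanSpace.norm_eq, frobNorm,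
    ← Real.sqrt_mul (frobInner_self_nonneg A)]
  refine Real.sqrt_le_sqrt ?_
  simp only [Real.norm_eq_abs, sq_abs]
  rw [frobInner, Finset.sum_mul]
  refine Finset.sum_le_sum fun i _ => ?_
  simpa [pow_two, mulVec, dotProduct] using
    Finset.sum_mul_sq_le_sq_mul_sq Finset.univ (fun j => A i j) (fun j => x j)

end OperatorNorm

theorem cordes_opNorm_le_general {d : ℕ} {ε : ℝ}
    (hε0 : 0 < ε)
    (A : Matrix (Fin d) (Fin d) ℝ) (hA : A ≠ 0) (hC : CordesCond ε A) :
    euclOpNorm ((trace A / frobNorm A ^ 2) • A) ≤ 1 + Real.sqrt (1 - ε) ∧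
      1 + Real.sqrt (1 - ε) ≤ 2 := by
  refine ⟨?_, by linarith [Real.sqrt_le_one.2 (by linarith : 1 - ε ≤ 1)]⟩
  calc euclOpNorm ((trace A / frobNorm A ^ 2) • A)
      ≤ 1 + euclOpNorm ((trace A / frobNorm A ^ 2) • A - 1) :=
        euclOpNorm_le_one_add_euclOpNorm_sub_one _
    _ ≤ 1 + frobNorm ((trace A / frobNorm A ^ 2) • A - 1) := by
        gcongr; exact euclOpNorm_le_frobNorm _
    _ ≤ 1 + Real.sqrt (1 - ε) := by
        gcongr; exact hC.frobNorm_normalize_sub_one_le hA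

theorem cordes_opNorm_le {d : ℕ} (hd : 1 ≤ d) {ε : ℝ}
    (hε0 : 0 < ε) (hε1 : ε ≤ 1)
    (A : Matrix (Fin d) (Fin d) ℝ) (hA : A ≠ 0) (hC : CordesCond ε A) :
    euclOpNorm ((trace A / frobNorm A ^ 2) • A) ≤ 1 + Real.sqrt (1 - ε) ∧
      1 + Real.sqrt (1 - ε) ≤ 2 :=
  cordes_opNorm_le_general hε0 A hA hC
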